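/- Uniform-in-$\delta$ spectral bound for rescaled kernels: let $w : [0,1] \to \mathbb{R}$ be $\mathbf{C}^1$, nonnegative, non-increasing, non-constant, with $\int_0^1 w = 1$, and for $\delta \in (0,1]$ set $w_\delta(s) = w(s/\delta)/\delta$ on $[0,\delta]$. Then there exists $\alpha > 0$ depending only on $w$ such that $2\pi k\, b_\delta(k) \geq \alpha$ for all integers $k \geq 1$ and all $\delta \in (0,1]$, where $b_\delta(k) = \frac{1}{\nu(\delta)}\int_0^\delta \sin(2\pi k s)\, w_\delta(s)\,ds$ and $\nu(\delta) = \int_0^\delta s\, w_\delta(s)\,ds$. -/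

import Mathlib

/-! Substituting `s = δ t` turns the quantity into `a S(a) / (δ² ν)` with `a = 2πkδ`,
`S(a) = ∫₀¹ sin (a t) w t` and `ν = ∫₀¹ t w t > 0`. For `a ≤ π/2`, Jordan's inequality
`sin x ≥ 2x/π` gives `S(a) ≥ 2aν/π`, so the quantity is at least `8πk²`. For `a ≥ 1`,
integrating by parts against `1 - cos (a t)` gives
`a S(a) ≥ ∫₀¹ (1 - cos (a t)) (-w' t) ≥ η ∫_{s₁}^{s₂} (1 - cos (a t))` on an interval where
`w' ≤ -η`, and the last integral is at least `(s₂ - s₁)³ / (6π²)` uniformly in `a ≥ 1`, because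
`|sin x| / x` stays below `1` away from `x = 0`. -/

open Real Set MeasureTheory intervalIntegral Filter Topology

lemma integral_mul_rescale (f w : ℝ → ℝ) {δ : ℝ} (hδ : δ ≠ 0) :
    ∫ s in (0:ℝ)..δ, f s * (w (s / δ) / δ) = ∫ t in (0:ℝ)..1, f (δ * t) * w t := by
  have h : ∀ s, f s * (w (s / δ) / δ) = δ⁻¹ * (fun t => f (δ * t) * w t) (s / δ) := fun s => by
    simp only [mul_div_cancel₀ _ hδ]; ring
  rw [integral_congr fun s _ => h s, intervalIntegral.integral_const_mul,
    integral_comp_div (fun t => f (δ * t) * w t) hδ, zero_div, div_self hδ, smul_eq_mul,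
    inv_mul_cancel_left₀ hδ]

lemma rescaled_sine_ratio_eq (w : ℝ → ℝ) {δ : ℝ} (hδ : δ ≠ 0) (b : ℝ) :
    b * ((1 / ∫ s in (0:ℝ)..δ, s * (w (s / δ) / δ)) *
        ∫ s in (0:ℝ)..δ, sin (b * s) * (w (s / δ) / δ))
      = b * δ * (∫ t in (0:ℝ)..1, sin (b * δ * t) * w t) /
          (δ ^ 2 * ∫ t in (0:ℝ)..1, t * w t) := by
  rw [integral_mul_rescale _ _ hδ, integral_mul_rescale (fun s => sin (b * s)) _ hδ]
  simp_rw [mul_assoc, intervalIntegral.integral_const_mul]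
  field_simp

lemma sin_le_sub_mul_cube {x : ℝ} (hx₀ : 0 ≤ x) (hxπ : x ≤ π) :
    sin x ≤ x - 2 / (3 * π ^ 2) * x ^ 3 := by
  have h := integral_mono_on hx₀ (continuous_cos.intervalIntegrable (μ := volume) 0 x)
    ((by fun_prop : Continuous fun t : ℝ => 1 - 2 / π ^ 2 * t ^ 2).intervalIntegrable 0 x)
    fun t ht => cos_le_one_sub_mul_cos_sq (abs_le.2 ⟨by linarith [ht.1, pi_pos], ht.2.trans hxπ⟩)
  simp only [integral_cos, integral_sub intervalIntegrable_const
    ((continuous_pow 2).intervalIntegrable _ _ |>.const_mul _),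
    intervalIntegral.integral_const_mul, integral_pow, intervalIntegral.integral_const,
    sin_zero] at h
  norm_num at h
  convert h using 1
  ring

lemma abs_sin_le_mul_of_le {x₀ x : ℝ} (hx₀ : 0 ≤ x₀) (hx₀π : x₀ ≤ π) (hx : x₀ ≤ x) :
    |sin x| ≤ (1 - 2 / (3 * π ^ 2) * x₀ ^ 2) * x := by
  have hκ : 2 / (3 * π ^ 2) * x₀ ^ 2 ≤ 2 / 3 := by
    rw [div_mul_eq_mul_div, div_le_iff₀ (by positivity)]
    nlinarith [mul_self_le_mul_self hx₀ hx₀π]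
  rcases le_or_gt x π with hxπ | hxπ
  · rw [abs_of_nonneg (sin_nonneg_of_nonneg_of_le_pi (hx₀.trans hx) hxπ)]
    have hcube : x₀ ^ 2 * x ≤ x ^ 3 := by nlinarith [mul_self_le_mul_self hx₀ hx]
    have := mul_le_mul_of_nonneg_left hcube (by positivity : (0:ℝ) ≤ 2 / (3 * π ^ 2))
    linarith [sin_le_sub_mul_cube (hx₀.trans hx) hxπ]
  · nlinarith [abs_sin_le_one x, pi_gt_three]

lemma integral_one_sub_cos_mul {a : ℝ} (ha : a ≠ 0) (s₁ s₂ : ℝ) :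
    ∫ t in s₁..s₂, (1 - cos (a * t)) = s₂ - s₁ - (sin (a * s₂) - sin (a * s₁)) / a := by
  rw [integral_sub intervalIntegrable_const
    ((by fun_prop : Continuous fun t => cos (a * t)).intervalIntegrable (μ := volume) _ _),
    integral_comp_mul_left cos ha, integral_cos, intervalIntegral.integral_const, smul_eq_mul,
    mul_one, smul_eq_mul, inv_mul_eq_div]

lemma le_integral_one_sub_cos_mul {s₁ s₂ a : ℝ} (h₁₂ : s₁ < s₂) (hL : s₂ - s₁ ≤ 2 * π)
    (ha : 1 ≤ a) : (s₂ - s₁) ^ 3 / (6 * π ^ 2) ≤ ∫ t in s₁..s₂, (1 - cos (a * t)) := by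
  have ha₀ : 0 < a := by linarith
  rw [integral_one_sub_cos_mul ha₀.ne', sin_sub_sin, ← mul_sub]
  set L := s₂ - s₁
  have hsin := abs_sin_le_mul_of_le (x := a * L / 2) (by linarith) (by linarith)
    (by nlinarith : L / 2 ≤ a * L / 2)
  have hprod : sin (a * L / 2) * cos ((a * s₂ + a * s₁) / 2) ≤ |sin (a * L / 2)| :=
    (le_abs_self _).trans <| by
      rw [abs_mul]; exact mul_le_of_le_one_right (abs_nonneg _) (abs_cos_le_one _)
  have hquot : 2 * sin (a * L / 2) * cos ((a * s₂ + a * s₁) / 2) / a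
      ≤ (1 - 2 / (3 * π ^ 2) * (L / 2) ^ 2) * L := by
    rw [div_le_iff₀ ha₀]; linarith
  have hcube : L ^ 3 / (6 * π ^ 2) = L - (1 - 2 / (3 * π ^ 2) * (L / 2) ^ 2) * L := by
    field_simp; ring
  linarith

section

variable {w : ℝ → ℝ}

lemma integral_self_mul_pos (hwc : ContinuousOn w (Icc 0 1))
    (hpos : ∀ s ∈ Icc (0:ℝ) 1, 0 ≤ w s) (h0 : 0 < w 0) : 0 < ∫ t in (0:ℝ)..1, t * w t := by
  have hev : ∀ᶠ t in 𝓝[Ioo 0 1] 0, 0 < w t ∧ t ∈ Ioo (0:ℝ) 1 :=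
    (((hwc 0 ⟨le_rfl, zero_le_one⟩).mono Ioo_subset_Icc_self).eventually_const_lt h0).and
      self_mem_nhdsWithin
  rw [nhdsWithin_Ioo_eq_nhdsGT zero_lt_one] at hev
  obtain ⟨c, hwc₀, hc⟩ := hev.exists
  exact integral_pos zero_lt_one (continuousOn_id.mul hwc)
    (fun t ht => mul_nonneg ht.1.le (hpos t (Ioc_subset_Icc_self ht)))
    ⟨c, Ioo_subset_Icc_self hc, mul_pos hc.1 hwc₀⟩

lemma mul_integral_mul_le_integral_sin_mul (hwc : ContinuousOn w (Icc 0 1))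
    (hpos : ∀ s ∈ Icc (0:ℝ) 1, 0 ≤ w s) {a : ℝ} (ha₀ : 0 ≤ a) (ha : a ≤ π / 2) :
    2 / π * a * ∫ t in (0:ℝ)..1, t * w t ≤ ∫ t in (0:ℝ)..1, sin (a * t) * w t := by
  have hint : ∀ f : ℝ → ℝ, Continuous f → IntervalIntegrable (fun t => f t * w t) volume 0 1 :=
    fun f hf => (hf.continuousOn.mul hwc).intervalIntegrable_of_Icc zero_le_one
  rw [← intervalIntegral.integral_const_mul]
  refine integral_mono_on zero_le_one ((hint _ continuous_id).const_mul _)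
    (hint _ (by fun_prop)) fun t ht => ?_
  have hsin : 2 / π * (a * t) ≤ sin (a * t) :=
    mul_le_sin (mul_nonneg ha₀ ht.1) (by nlinarith [ht.1, ht.2])
  calc 2 / π * a * (t * w t) = 2 / π * (a * t) * w t := by ring
    _ ≤ sin (a * t) * w t := mul_le_mul_of_nonneg_right hsin (hpos t ht)

lemma mul_integral_sin_mul_eq (hw : ContDiffOn ℝ 1 w (Icc 0 1)) (a : ℝ) :
    a * ∫ t in (0:ℝ)..1, sin (a * t) * w t
      = (1 - cos a) * w 1 - ∫ t in (0:ℝ)..1, derivWithin w (Icc 0 1) t * (1 - cos (a * t)) := by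
  have hw' : ∀ x ∈ uIcc (0:ℝ) 1, HasDerivWithinAt w (derivWithin w (Icc 0 1) x) (uIcc 0 1) x := by
    rw [uIcc_of_le zero_le_one]
    exact fun x hx => ((hw.differentiableOn one_ne_zero) x hx).hasDerivWithinAt
  have hv : ∀ x ∈ uIcc (0:ℝ) 1,
      HasDerivWithinAt (fun t => 1 - cos (a * t)) (a * sin (a * x)) (uIcc 0 1) x := by
    intro x _
    have := ((hasDerivAt_id x).const_mul a).cos.const_sub 1
    simp only [id, mul_one, neg_mul] at this
    exact (this.congr_deriv (by ring)).hasDerivWithinAt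
  have hg : IntervalIntegrable (derivWithin w (Icc 0 1)) volume 0 1 :=
    (hw.continuousOn_derivWithin (uniqueDiffOn_Icc one_pos) le_rfl).intervalIntegrable_of_Icc
      zero_le_one
  have := integral_mul_deriv_eq_deriv_mul_of_hasDerivWithinAt hw' hv hg
    ((by fun_prop : Continuous fun t => a * sin (a * t)).intervalIntegrable 0 1)
  rw [← intervalIntegral.integral_const_mul]
  simp only [mul_zero, cos_zero, sub_self, mul_one, sub_zero] at this
  rw [mul_comm (1 - cos a), ← this]
  congr 1 with t
  ring

lemma exists_Icc_derivWithin_le_neg (hw : ContDiffOn ℝ 1 w (Icc 0 1)) (hnc : w 1 < w 0) :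
    ∃ s₁ s₂ η : ℝ, 0 ≤ s₁ ∧ s₁ < s₂ ∧ s₂ ≤ 1 ∧ 0 < η ∧
      ∀ t ∈ Icc s₁ s₂, derivWithin w (Icc 0 1) t ≤ -η := by
  set g := derivWithin w (Icc 0 1)
  obtain ⟨c, hc, hgc⟩ := exists_hasDerivAt_eq_slope w g one_pos hw.continuousOn fun x hx =>
    ((hw.differentiableOn one_ne_zero) x (Ioo_subset_Icc_self hx)).hasDerivWithinAt.hasDerivAt
      (Icc_mem_nhds hx.1 hx.2)
  have hneg : g c < g c / 2 := by rw [hgc]; linarith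
  have hcont : ContinuousAt g c :=
    (hw.continuousOn_derivWithin (uniqueDiffOn_Icc one_pos) le_rfl).continuousAt
      (Icc_mem_nhds hc.1 hc.2)
  obtain ⟨ε, hε, hball⟩ := Metric.nhds_basis_closedBall.mem_iff.1
    (inter_mem (Icc_mem_nhds hc.1 hc.2) (hcont.eventually_lt_const hneg))
  rw [Real.closedBall_eq_Icc] at hball
  have hend : ∀ t ∈ Icc (c - ε) (c + ε), t ∈ Icc (0:ℝ) 1 := fun t ht => (hball ht).1
  refine ⟨c - ε, c + ε, -(g c / 2), (hend _ (left_mem_Icc.2 (by linarith))).1, by linarith,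
    (hend _ (right_mem_Icc.2 (by linarith))).2, by linarith, fun t ht => ?_⟩
  rw [neg_neg]
  exact (hball ht).2.le

lemma exists_pos_le_mul_integral_sin_mul (hw : ContDiffOn ℝ 1 w (Icc 0 1)) (hw₁ : 0 ≤ w 1)
    (hmono : AntitoneOn w (Icc 0 1)) (hnc : w 1 < w 0) :
    ∃ c > 0, ∀ a, 1 ≤ a → c ≤ a * ∫ t in (0:ℝ)..1, sin (a * t) * w t := by
  obtain ⟨s₁, s₂, η, hs₁, h₁₂, hs₂, hη, hgη⟩ := exists_Icc_derivWithin_le_neg hw hnc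
  refine ⟨η * ((s₂ - s₁) ^ 3 / (6 * π ^ 2)), mul_pos hη (by have := sub_pos.2 h₁₂; positivity),
    fun a ha => ?_⟩
  set g := derivWithin w (Icc 0 1)
  set F := fun t => -(g t * (1 - cos (a * t)))
  have hF : ContinuousOn F (Icc 0 1) :=
    ((hw.continuousOn_derivWithin (uniqueDiffOn_Icc one_pos) le_rfl).mul
      (by fun_prop : Continuous fun t => 1 - cos (a * t)).continuousOn).neg
  have hF₀ : ∀ t ∈ Icc (0:ℝ) 1, 0 ≤ F t := fun t _ =>
    neg_nonneg.2 (mul_nonpos_of_nonpos_of_nonneg hmono.derivWithin_nonpos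
      (sub_nonneg.2 (cos_le_one _)))
  have hmid : η * ∫ t in s₁..s₂, (1 - cos (a * t)) ≤ ∫ t in s₁..s₂, F t := by
    rw [← intervalIntegral.integral_const_mul]
    refine integral_mono_on h₁₂.le
      ((by fun_prop : Continuous fun t => η * (1 - cos (a * t))).intervalIntegrable _ _)
      ((hF.mono (Icc_subset_Icc hs₁ hs₂)).intervalIntegrable_of_Icc h₁₂.le) fun t ht => ?_
    have := mul_le_mul_of_nonneg_right (hgη t ht) (sub_nonneg.2 (cos_le_one (a * t)))
    simp only [F]; linarith
  have hsub : ∫ t in s₁..s₂, F t ≤ ∫ t in (0:ℝ)..1, F t :=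
    integral_mono_interval hs₁ h₁₂.le hs₂
      ((ae_restrict_iff' measurableSet_Ioc).2 <|
        ae_of_all _ fun t ht => hF₀ t (Ioc_subset_Icc_self ht))
      (hF.intervalIntegrable_of_Icc zero_le_one)
  have hbdry : 0 ≤ (1 - cos a) * w 1 := mul_nonneg (sub_nonneg.2 (cos_le_one a)) hw₁
  have hcos := le_integral_one_sub_cos_mul h₁₂ (by linarith [pi_gt_three]) ha
  calc η * ((s₂ - s₁) ^ 3 / (6 * π ^ 2)) ≤ η * ∫ t in s₁..s₂, (1 - cos (a * t)) :=
        mul_le_mul_of_nonneg_left hcos hη.le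
    _ ≤ ∫ t in (0:ℝ)..1, F t := hmid.trans hsub
    _ ≤ (1 - cos a) * w 1 + ∫ t in (0:ℝ)..1, F t := le_add_of_nonneg_left hbdry
    _ = a * ∫ t in (0:ℝ)..1, sin (a * t) * w t := by
        rw [mul_integral_sin_mul_eq hw, intervalIntegral.integral_neg]; ring

end

theorem stmt8_general (w : ℝ → ℝ)
    (hw : ContDiffOn ℝ 1 w (Icc 0 1))
    (hpos : ∀ s ∈ Icc (0:ℝ) 1, 0 ≤ w s)
    (hmono : AntitoneOn w (Icc 0 1))
    (hnc : w 1 < w 0) :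
    ∃ α > 0, ∀ δ ∈ Ioc (0:ℝ) 1, ∀ k : ℕ, 1 ≤ k →
      α ≤ 2 * π * k *
        ((1 / ∫ s in (0:ℝ)..δ, s * (w (s / δ) / δ)) *
          ∫ s in (0:ℝ)..δ, Real.sin (2 * π * k * s) * (w (s / δ) / δ)) := by
  have hw₁ : 0 ≤ w 1 := hpos 1 (right_mem_Icc.2 zero_le_one)
  obtain ⟨c, hc, hlarge⟩ := exists_pos_le_mul_integral_sin_mul hw hw₁ hmono hnc
  set ν := ∫ t in (0:ℝ)..1, t * w t
  have hν : 0 < ν := integral_self_mul_pos hw.continuousOn hpos (hw₁.trans_lt hnc)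
  refine ⟨min (8 * π) (c / ν), lt_min (by positivity) (div_pos hc hν), ?_⟩
  rintro δ ⟨hδ, hδ₁⟩ k hk
  have hk₁ : (1:ℝ) ≤ k := Nat.one_le_cast.2 hk
  rw [rescaled_sine_ratio_eq w hδ.ne']
  set a := 2 * π * k * δ with ha_def
  have ha₀ : 0 ≤ a := by positivity
  set S := ∫ t in (0:ℝ)..1, sin (a * t) * w t
  rcases le_or_gt a (π / 2) with ha | ha
  · have hsmall := mul_integral_mul_le_integral_sin_mul hw.continuousOn hpos ha₀ ha
    calc min (8 * π) (c / ν) ≤ 8 * π := min_le_left _ _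
      _ ≤ 8 * π * k ^ 2 := le_mul_of_one_le_right (by positivity) (one_le_pow₀ hk₁)
      _ = a * (2 / π * a * ν) / (δ ^ 2 * ν) := by rw [ha_def]; field_simp; ring
      _ ≤ a * S / (δ ^ 2 * ν) :=
          div_le_div_of_nonneg_right (mul_le_mul_of_nonneg_left hsmall ha₀) (by positivity)
  · calc min (8 * π) (c / ν) ≤ c / ν := min_le_right _ _
      _ ≤ c / (δ ^ 2 * ν) := div_le_div_of_nonneg_left hc.le (by positivity)
          (mul_le_of_le_one_left hν.le (pow_le_one₀ hδ.le hδ₁))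
      _ ≤ a * S / (δ ^ 2 * ν) :=
          div_le_div_of_nonneg_right (hlarge a (by linarith [pi_gt_three])) (by positivity)

theorem stmt8 (w : ℝ → ℝ)
    (hw : ContDiffOn ℝ 1 w (Icc 0 1))
    (hpos : ∀ s ∈ Icc (0:ℝ) 1, 0 ≤ w s)
    (hmono : AntitoneOn w (Icc 0 1))
    (hnc : w 1 < w 0)
    (hnorm : (∫ s in (0:ℝ)..1, w s) = 1) :
    ∃ α > 0, ∀ δ ∈ Ioc (0:ℝ) 1, ∀ k : ℕ, 1 ≤ k →
      α ≤ 2 * π * k *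
        ((1 / ∫ s in (0:ℝ)..δ, s * (w (s / δ) / δ)) *
          ∫ s in (0:ℝ)..δ, Real.sin (2 * π * k * s) * (w (s / δ) / δ)) :=
  stmt8_general w hw hpos hmono hnc
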